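/- Let w ≠ 0, a > 0, b ∈ ℝ and ε ∈ {1, −1}. On the open set U = {(ρ,z) ∈ ℝ² : ρ > 0 and sin(ε a ln ρ + b) > 0}, define η(ρ) = ρ (|w|/a) sin(ε a ln ρ + b), σ = ln(η/ρ²), and ω(ρ,z) = w z. Then (σ, ω) satisfies the reduced vacuum Einstein equations Δσ = −e^{−2σ}(ω_ρ² + ω_z²)/ρ⁴ and Δω = 4ω_ρ/ρ + 2(ω_ρσ_ρ + ω_zσ_z) on U. -/

import Mathlib

/-- Partial derivative with respect to the first (ρ) variable. -/
noncomputable def pdr (f : ℝ × ℝ → ℝ) (p : ℝ × ℝ) : ℝ :=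
  deriv (fun x => f (x, p.2)) p.1

/-- Partial derivative with respect to the second (z) variable. -/
noncomputable def pdz (f : ℝ × ℝ → ℝ) (p : ℝ × ℝ) : ℝ :=
  deriv (fun y => f (p.1, y)) p.2

/-- The flat cylindrically symmetric Laplacian Δ = ∂²_ρ + (1/ρ)∂_ρ + ∂²_z. -/
noncomputable def lap (f : ℝ × ℝ → ℝ) (p : ℝ × ℝ) : ℝ :=
  pdr (pdr f) p + pdr f p / p.1 + pdz (pdz f) p

/-! σ depends on ρ alone and ω on z alone, so ω is harmonic, all cross terms vanish and the
second equation reads `0 = 0`. In the variable `t = log ρ` the radial Laplacian is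
`ρ⁻² d²/dt²`, and with `c = |w|/a`, `k = εa` one has `σ = log (c sin (k t + b)) - t`, whose second
`t`-derivative is `-k² / sin² (k t + b)`. On the other side `e^{-2σ} = ρ⁴/η² = ρ² / (c² sin²)`,
and `c² k² = w²` because `ε² = 1`. -/

open Real Filter Topology

lemma pdr_comp_fst (g : ℝ → ℝ) (p : ℝ × ℝ) : pdr (fun q => g q.1) p = deriv g p.1 := rfl

lemma pdz_comp_fst (g : ℝ → ℝ) (p : ℝ × ℝ) : pdz (fun q => g q.1) p = 0 :=
  deriv_const p.2 (g p.1)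

lemma pdr_comp_snd (h : ℝ → ℝ) (p : ℝ × ℝ) : pdr (fun q => h q.2) p = 0 :=
  deriv_const p.1 (h p.2)

lemma pdz_comp_snd (h : ℝ → ℝ) (p : ℝ × ℝ) : pdz (fun q => h q.2) p = deriv h p.2 := rfl

noncomputable def radialLap (f : ℝ → ℝ) (x : ℝ) : ℝ :=
  deriv (deriv f) x + deriv f x / x

lemma lap_comp_fst (g : ℝ → ℝ) (p : ℝ × ℝ) : lap (fun q => g q.1) p = radialLap g p.1 := by
  have hr : pdr (fun q => g q.1) = fun q => deriv g q.1 := funext (pdr_comp_fst g)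
  have hz : pdz (fun q => g q.1) = fun _ => 0 := funext (pdz_comp_fst g)
  rw [lap, pdr_comp_fst g p, hr, hz, pdr_comp_fst (deriv g), pdz_comp_fst (fun _ => 0), add_zero,
    radialLap]

lemma lap_comp_snd (h : ℝ → ℝ) (p : ℝ × ℝ) :
    lap (fun q => h q.2) p = deriv (deriv h) p.2 := by
  have hr : pdr (fun q => h q.2) = fun _ => 0 := funext (pdr_comp_snd h)
  have hz : pdz (fun q => h q.2) = fun q => deriv h q.2 := funext (pdz_comp_snd h)
  rw [lap, pdr_comp_snd h p, hr, hz, pdr_comp_snd (fun _ => 0), pdz_comp_snd (deriv h), zero_div,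
    zero_add, zero_add]

lemma radialLap_eq_of_eventually_eq_comp_log {f F F' : ℝ → ℝ} {F'' x : ℝ}
    (hx : 0 < x) (hf : ∀ᶠ y in 𝓝 x, f y = F (log y))
    (hF : ∀ᶠ t in 𝓝 (log x), HasDerivAt F (F' t) t) (hF' : HasDerivAt F' F'' (log x)) :
    radialLap f x = F'' / x ^ 2 := by
  have hlog : Tendsto log (𝓝 x) (𝓝 (log x)) := (continuousAt_log hx.ne').tendsto
  have hderiv : ∀ᶠ y in 𝓝 x, HasDerivAt f (F' (log y) * y⁻¹) y := by
    filter_upwards [hf.eventually_nhds, hlog.eventually hF, eventually_gt_nhds hx]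
      with y hfy hFy hy
    exact (hFy.comp y (hasDerivAt_log hy.ne')).congr_of_eventuallyEq hfy
  have hderiv' : deriv f =ᶠ[𝓝 x] fun y => F' (log y) * y⁻¹ :=
    hderiv.mono fun y hy => hy.deriv
  have h2 : HasDerivAt (fun y => F' (log y) * y⁻¹)
      (F'' * x⁻¹ * x⁻¹ + F' (log x) * -(x ^ 2)⁻¹) x :=
    (hF'.comp x (hasDerivAt_log hx.ne')).mul (hasDerivAt_inv hx.ne')
  rw [radialLap, hderiv'.deriv_eq, h2.deriv, hderiv.self_of_nhds.deriv]
  field_simp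
  ring

lemma hasDerivAt_log_const_mul_sin_sub {c k b t : ℝ} (hc : c ≠ 0) (hs : sin (k * t + b) ≠ 0) :
    HasDerivAt (fun t => log (c * sin (k * t + b)) - t)
      (k * cos (k * t + b) / sin (k * t + b) - 1) t := by
  have hθ : HasDerivAt (fun t => k * t + b) (k * 1) t := ((hasDerivAt_id t).const_mul k).add_const b
  refine (((hθ.sin.const_mul c).log (mul_ne_zero hc hs)).sub (hasDerivAt_id t)).congr_deriv ?_
  field_simp

lemma hasDerivAt_mul_cos_div_sin_sub_one {k b t : ℝ} (hs : sin (k * t + b) ≠ 0) :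
    HasDerivAt (fun t => k * cos (k * t + b) / sin (k * t + b) - 1)
      (-k ^ 2 / sin (k * t + b) ^ 2) t := by
  have hθ : HasDerivAt (fun t => k * t + b) (k * 1) t := ((hasDerivAt_id t).const_mul k).add_const b
  refine (((hθ.cos.const_mul k).div hθ.sin hs).sub_const 1).congr_deriv ?_
  field_simp
  linear_combination -k ^ 2 * sin_sq_add_cos_sq (k * t + b)

lemma exp_neg_two_mul_log {y : ℝ} (hy : y ≠ 0) : exp (-2 * log y) = (y ^ 2)⁻¹ := by
  rw [neg_mul, exp_neg, ← Nat.cast_ofNat, ← log_pow, exp_log (sq_pos_of_ne_zero hy)]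

lemma radialLap_log_mul_sin_div_sq {c k b x : ℝ} (hc : c ≠ 0) (hx : 0 < x)
    (hs : sin (k * log x + b) ≠ 0) :
    radialLap (fun x => log (x * c * sin (k * log x + b) / x ^ 2)) x =
      -k ^ 2 / sin (k * log x + b) ^ 2 / x ^ 2 := by
  have hcont : Continuous fun t => sin (k * t + b) := by fun_prop
  have hsin : ∀ᶠ t in 𝓝 (log x), sin (k * t + b) ≠ 0 := hcont.continuousAt.eventually_ne hs
  have hf : ∀ᶠ y in 𝓝 x, log (y * c * sin (k * log y + b) / y ^ 2) =
      log (c * sin (k * log y + b)) - log y := by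
    filter_upwards [(continuousAt_log hx.ne').tendsto.eventually hsin, eventually_ne_nhds hx.ne']
      with y hsy hy
    rw [← log_div (mul_ne_zero hc hsy) hy]
    congr 1
    field_simp
  exact radialLap_eq_of_eventually_eq_comp_log hx hf
    (hsin.mono fun t ht => hasDerivAt_log_const_mul_sin_sub hc ht)
    (hasDerivAt_mul_cos_div_sin_sub_one hs)

theorem lewis_I_solves_reduced_einstein
    (w a b ε : ℝ) (hw : w ≠ 0) (ha : 0 < a) (hε : ε = 1 ∨ ε = -1)
    (η σ ω : ℝ × ℝ → ℝ)
    (hη : ∀ p : ℝ × ℝ, η p = p.1 * (|w| / a) * Real.sin (ε * a * Real.log p.1 + b))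
    (hσ : ∀ p : ℝ × ℝ, σ p = Real.log (η p / p.1 ^ 2))
    (hω : ∀ p : ℝ × ℝ, ω p = w * p.2) :
    ∀ p : ℝ × ℝ, 0 < p.1 → 0 < Real.sin (ε * a * Real.log p.1 + b) →
      lap σ p = - Real.exp (-2 * σ p) * ((pdr ω p) ^ 2 + (pdz ω p) ^ 2) / p.1 ^ 4
      ∧ lap ω p = 4 * pdr ω p / p.1
          + 2 * (pdr ω p * pdr σ p + pdz ω p * pdz σ p) := by
  intro p hρ hs
  set c := |w| / a with hc_def
  set k := ε * a with hk_def
  have hc : c ≠ 0 := (div_pos (abs_pos.2 hw) ha).ne'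
  have hε2 : ε ^ 2 = 1 := by rcases hε with rfl | rfl <;> norm_num
  have hck : c ^ 2 * k ^ 2 = w ^ 2 := by
    rw [hc_def, hk_def, mul_pow, hε2, div_pow, sq_abs]
    field_simp
  clear_value c k
  set σ₁ : ℝ → ℝ := fun x => log (x * c * sin (k * log x + b) / x ^ 2) with hσ₁
  obtain rfl : σ = fun q => σ₁ q.1 := funext fun q => by rw [hσ, hη]
  obtain rfl : ω = fun q => w * q.2 := funext hω
  have hω_z : pdz (fun q => w * q.2) p = w := by rw [pdz_comp_snd (w * ·)]; simp
  constructor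
  · rw [lap_comp_fst, radialLap_log_mul_sin_div_sq hc hρ hs.ne', pdr_comp_snd (w * ·), hω_z, hσ₁,
      exp_neg_two_mul_log (by positivity)]
    field_simp
    linear_combination -hck
  · rw [lap_comp_snd (w * ·), pdr_comp_snd (w * ·), pdz_comp_fst]
    simp
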